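/- arXiv:1809.09614 — 2 statements merged into one kernel-verified Lean document; each statement's English description precedes it below -/
import Mathlib

section
/- Let T be the folded Baker's map on Q₂. For any k, k', l ∈ ℕ with l ≤ k', j ∈ ℤ ∩ [0, 2^k), and j' ∈ ℤ ∩ [0, 2^{k'}), the set T^l(H^j_k ∩ V^{j'}_{k'}) is a single dyadic rectangle of size 2^{-(k'-l)} × 2^{-(k+l)}; that is, there exist a ∈ ℤ ∩ [0, 2^{k+l}) and b ∈ ℤ ∩ [0, 2^{k'-l}) such that T^l(H^j_k ∩ V^{j'}_{k'}) = H^a_{k+l} ∩ V^b_{k'-l}. -/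
open MeasureTheory Set

/-- The folded Baker's map on the unit square `Q₂ = (0,1)²` (extended to all of `ℝ²`
by the same formulas). -/
noncomputable def foldedBaker : ℝ × ℝ → ℝ × ℝ := fun p =>
  if p.1 < 1/2 then (1 - 2 * p.1, (1 - p.2) / 2)
  else if p.1 = 1/2 then (p.2, 1/2)
  else (2 * p.1 - 1, (1 + p.2) / 2)

/-- The open unit square. -/
def Q2 : Set (ℝ × ℝ) := Ioo (0:ℝ) 1 ×ˢ Ioo (0:ℝ) 1

/-- `Q₂` minus all points with a dyadic rational coordinate. -/
def Q2' : Set (ℝ × ℝ) :=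
  Q2 \ {p | ∃ k : ℕ, (∃ m : ℤ, 2 ^ k * p.1 = (m : ℝ)) ∨ (∃ m : ℤ, 2 ^ k * p.2 = (m : ℝ))}

/-- The horizontal dyadic strip `H^j_k` of width `2^{-k}`. -/
def Hstrip (j k : ℕ) : Set (ℝ × ℝ) :=
  (Ioo (0:ℝ) 1 ×ˢ Ioo ((j : ℝ) / 2 ^ k) (((j : ℝ) + 1) / 2 ^ k)) ∩ Q2'

/-- The vertical dyadic strip `V^j_k` of width `2^{-k}`. -/
def Vstrip (j k : ℕ) : Set (ℝ × ℝ) :=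
  (Ioo ((j : ℝ) / 2 ^ k) (((j : ℝ) + 1) / 2 ^ k) ×ˢ Ioo (0:ℝ) 1) ∩ Q2'

def ND (x : ℝ) : Prop := ∀ (n : ℕ) (m : ℤ), (2:ℝ) ^ n * x ≠ (m : ℝ)

lemma ND.two_mul {x : ℝ} (h : ND x) : ND (2 * x) := fun n m hm =>
  h (n+1) m (by push_cast at hm ⊢; linear_combination hm)

lemma ND.half {x : ℝ} (h : ND x) : ND (x / 2) := fun n m hm =>
  h n (2*m) (by push_cast at hm ⊢; linear_combination 2 * hm)

lemma ND.one_sub {x : ℝ} (h : ND x) : ND (1 - x) := fun n m hm =>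
  h n (2^n - m) (by push_cast at hm ⊢; linear_combination -hm)

lemma ND.one_add {x : ℝ} (h : ND x) : ND (1 + x) := fun n m hm =>
  h n (m - 2^n) (by push_cast at hm ⊢; linear_combination hm)

lemma ND.sub_one {x : ℝ} (h : ND x) : ND (x - 1) := fun n m hm =>
  h n (m + 2^n) (by push_cast at hm ⊢; linear_combination hm)

lemma mem_Q2' {p : ℝ × ℝ} :
    p ∈ Q2' ↔ ((0 < p.1 ∧ p.1 < 1) ∧ (0 < p.2 ∧ p.2 < 1)) ∧ ND p.1 ∧ ND p.2 := by
  unfold Q2' Q2 ND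
  simp only [mem_diff, mem_setOf_eq, mem_prod, mem_Ioo]
  constructor
  · rintro ⟨hQ, h⟩
    exact ⟨hQ, fun n m hm => h ⟨n, Or.inl ⟨m, hm⟩⟩, fun n m hm => h ⟨n, Or.inr ⟨m, hm⟩⟩⟩
  · rintro ⟨hQ, h1, h2⟩
    refine ⟨hQ, ?_⟩
    rintro ⟨n, ⟨m, hm⟩ | ⟨m, hm⟩⟩
    exacts [h1 n m hm, h2 n m hm]

lemma mem_rect {j k j' k' : ℕ} {p : ℝ × ℝ} :
    p ∈ Hstrip j k ∩ Vstrip j' k' ↔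
      ((j' : ℝ) / 2 ^ k' < p.1 ∧ p.1 < ((j' : ℝ) + 1) / 2 ^ k') ∧
      ((j : ℝ) / 2 ^ k < p.2 ∧ p.2 < ((j : ℝ) + 1) / 2 ^ k) ∧
      (0 < p.1 ∧ p.1 < 1) ∧ (0 < p.2 ∧ p.2 < 1) ∧ ND p.1 ∧ ND p.2 := by
  simp only [Hstrip, Vstrip, mem_inter_iff, mem_prod, mem_Ioo, mem_Q2']
  tauto

lemma baker_lt {p : ℝ × ℝ} (h : p.1 < 1/2) :
    foldedBaker p = (1 - 2 * p.1, (1 - p.2) / 2) := by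
  simp only [foldedBaker]; rw [if_pos h]

lemma baker_gt {p : ℝ × ℝ} (h : 1/2 < p.1) :
    foldedBaker p = (2 * p.1 - 1, (1 + p.2) / 2) := by
  simp only [foldedBaker]; rw [if_neg (not_lt.mpr h.le), if_neg h.ne']

lemma step (k K j j' : ℕ) (hj : j < 2 ^ k) (hj' : j' < 2 ^ (K + 1)) :
    ∃ a b : ℕ, a < 2 ^ (k + 1) ∧ b < 2 ^ K ∧
      foldedBaker '' (Hstrip j k ∩ Vstrip j' (K + 1)) = Hstrip a (k + 1) ∩ Vstrip b K := by
  have h2K : (0:ℝ) < 2 ^ K := by positivity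
  have h2k : (0:ℝ) < 2 ^ k := by positivity
  have hpk : 2 ^ k ≤ 2 ^ (k+1) := Nat.pow_le_pow_right (by norm_num) (Nat.le_succ k)
  have hpK : (2:ℕ) ^ (K+1) = 2 * 2 ^ K := by rw [pow_succ]; ring
  by_cases hcase : j' < 2 ^ K
  · -- left half: x < 1/2
    refine ⟨2 ^ k - (j+1), 2 ^ K - (j'+1), by omega, by omega, ?_⟩
    have ca : ((2 ^ k - (j+1) : ℕ) : ℝ) = 2 ^ k - ((j:ℝ)+1) := by
      rw [Nat.cast_sub hj]; push_cast; ring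
    have cb : ((2 ^ K - (j'+1) : ℕ) : ℝ) = 2 ^ K - ((j':ℝ)+1) := by
      rw [Nat.cast_sub hcase]; push_cast; ring
    have hj'r : ((j':ℝ) + 1) ≤ 2 ^ K := by exact_mod_cast hcase
    ext p
    simp only [Set.mem_image]
    constructor
    · rintro ⟨q, hq, rfl⟩
      rw [mem_rect] at hq
      obtain ⟨⟨hx1, hx2⟩, ⟨hy1, hy2⟩, ⟨hq10, hq11⟩, ⟨hq20, hq21⟩, hndx, hndy⟩ := hq
      simp only [pow_succ] at hx1 hx2
      have Hx1 : (j':ℝ) < q.1 * (2 ^ K * 2) := by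
        rwa [div_lt_iff₀ (by positivity)] at hx1
      have Hx2 : q.1 * (2 ^ K * 2) < (j':ℝ) + 1 := by
        rwa [lt_div_iff₀ (by positivity)] at hx2
      have Hy1 : (j:ℝ) < q.2 * 2 ^ k := by rwa [div_lt_iff₀ h2k] at hy1
      have Hy2 : q.2 * 2 ^ k < (j:ℝ) + 1 := by rwa [lt_div_iff₀ h2k] at hy2
      have hhalf : q.1 < 1/2 := by
        by_contra hcon
        push_neg at hcon
        have : (1/2:ℝ) * (2 ^ K * 2) ≤ q.1 * (2 ^ K * 2) :=
          mul_le_mul_of_nonneg_right hcon (by positivity)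
        linarith
      rw [baker_lt hhalf, mem_rect]
      refine ⟨⟨?_, ?_⟩, ⟨?_, ?_⟩, ⟨by linarith, by linarith⟩,
        ⟨by linarith, by linarith⟩, (hndx.two_mul).one_sub, hndy.one_sub.half⟩
      · rw [cb, div_lt_iff₀ h2K]; linarith
      · rw [cb, lt_div_iff₀ h2K]; linarith
      · rw [ca]; simp only [pow_succ]; rw [div_lt_iff₀ (by positivity)]; linarith
      · rw [ca]; simp only [pow_succ]; rw [lt_div_iff₀ (by positivity)]; linarith
    · intro hp
      rw [mem_rect] at hp
      obtain ⟨⟨hx1, hx2⟩, ⟨hy1, hy2⟩, ⟨hp10, hp11⟩, ⟨hp20, hp21⟩, hndx, hndy⟩ := hp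
      rw [cb] at hx1 hx2
      rw [ca] at hy1 hy2
      simp only [pow_succ] at hy1 hy2
      have Hx1 : 2 ^ K - ((j':ℝ)+1) < p.1 * 2 ^ K := by rwa [div_lt_iff₀ h2K] at hx1
      have Hx2 : p.1 * 2 ^ K < 2 ^ K - ((j':ℝ)+1) + 1 := by rwa [lt_div_iff₀ h2K] at hx2
      have Hy1 : 2 ^ k - ((j:ℝ)+1) < p.2 * (2 ^ k * 2) := by
        rwa [div_lt_iff₀ (by positivity)] at hy1
      have Hy2 : p.2 * (2 ^ k * 2) < 2 ^ k - ((j:ℝ)+1) + 1 := by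
        rwa [lt_div_iff₀ (by positivity)] at hy2
      have hjr : (0:ℝ) ≤ (j:ℝ) := Nat.cast_nonneg j
      have hp2half : p.2 < 1/2 := by
        by_contra hcon
        push_neg at hcon
        have : (1/2:ℝ) * (2 ^ k * 2) ≤ p.2 * (2 ^ k * 2) :=
          mul_le_mul_of_nonneg_right hcon (by positivity)
        linarith
      refine ⟨((1 - p.1)/2, 1 - 2 * p.2), ?_, ?_⟩
      · rw [mem_rect]
        refine ⟨⟨?_, ?_⟩, ⟨?_, ?_⟩, ⟨by linarith, by linarith⟩,
          ⟨by linarith, by linarith⟩, hndx.one_sub.half, (hndy.two_mul).one_sub⟩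
        · simp only [pow_succ]; rw [div_lt_iff₀ (by positivity)]; linarith
        · simp only [pow_succ]; rw [lt_div_iff₀ (by positivity)]; linarith
        · rw [div_lt_iff₀ h2k]; linarith
        · rw [lt_div_iff₀ h2k]; linarith
      · rw [baker_lt (show ((1 - p.1)/2 : ℝ) < 1/2 by linarith)]
        exact Prod.ext (by ring) (by ring)
  · -- right half: x > 1/2
    have hcase' : 2 ^ K ≤ j' := le_of_not_gt hcase
    refine ⟨2 ^ k + j, j' - 2 ^ K, by omega, by omega, ?_⟩
    have ca : ((2 ^ k + j : ℕ) : ℝ) = 2 ^ k + (j:ℝ) := by push_cast; ring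
    have cb : ((j' - 2 ^ K : ℕ) : ℝ) = (j':ℝ) - 2 ^ K := by
      rw [Nat.cast_sub hcase']; push_cast; ring
    have hj'r : (2:ℝ) ^ K ≤ (j':ℝ) := by exact_mod_cast hcase'
    ext p
    simp only [Set.mem_image]
    constructor
    · rintro ⟨q, hq, rfl⟩
      rw [mem_rect] at hq
      obtain ⟨⟨hx1, hx2⟩, ⟨hy1, hy2⟩, ⟨hq10, hq11⟩, ⟨hq20, hq21⟩, hndx, hndy⟩ := hq
      simp only [pow_succ] at hx1 hx2
      have Hx1 : (j':ℝ) < q.1 * (2 ^ K * 2) := by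
        rwa [div_lt_iff₀ (by positivity)] at hx1
      have Hx2 : q.1 * (2 ^ K * 2) < (j':ℝ) + 1 := by
        rwa [lt_div_iff₀ (by positivity)] at hx2
      have Hy1 : (j:ℝ) < q.2 * 2 ^ k := by rwa [div_lt_iff₀ h2k] at hy1
      have Hy2 : q.2 * 2 ^ k < (j:ℝ) + 1 := by rwa [lt_div_iff₀ h2k] at hy2
      have hhalf : 1/2 < q.1 := by
        by_contra hcon
        push_neg at hcon
        have : q.1 * (2 ^ K * 2) ≤ (1/2:ℝ) * (2 ^ K * 2) :=
          mul_le_mul_of_nonneg_right hcon (by positivity)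
        linarith
      rw [baker_gt hhalf, mem_rect]
      refine ⟨⟨?_, ?_⟩, ⟨?_, ?_⟩, ⟨by linarith, by linarith⟩,
        ⟨by linarith, by linarith⟩, (hndx.two_mul).sub_one, hndy.one_add.half⟩
      · rw [cb, div_lt_iff₀ h2K]; linarith
      · rw [cb, lt_div_iff₀ h2K]; linarith
      · rw [ca]; simp only [pow_succ]; rw [div_lt_iff₀ (by positivity)]; linarith
      · rw [ca]; simp only [pow_succ]; rw [lt_div_iff₀ (by positivity)]; linarith
    · intro hp
      rw [mem_rect] at hp
      obtain ⟨⟨hx1, hx2⟩, ⟨hy1, hy2⟩, ⟨hp10, hp11⟩, ⟨hp20, hp21⟩, hndx, hndy⟩ := hp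
      rw [cb] at hx1 hx2
      rw [ca] at hy1 hy2
      simp only [pow_succ] at hy1 hy2
      have Hx1 : (j':ℝ) - 2 ^ K < p.1 * 2 ^ K := by rwa [div_lt_iff₀ h2K] at hx1
      have Hx2 : p.1 * 2 ^ K < (j':ℝ) - 2 ^ K + 1 := by rwa [lt_div_iff₀ h2K] at hx2
      have Hy1 : 2 ^ k + (j:ℝ) < p.2 * (2 ^ k * 2) := by
        rwa [div_lt_iff₀ (by positivity)] at hy1
      have Hy2 : p.2 * (2 ^ k * 2) < 2 ^ k + (j:ℝ) + 1 := by
        rwa [lt_div_iff₀ (by positivity)] at hy2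
      have hjr : (0:ℝ) ≤ (j:ℝ) := Nat.cast_nonneg j
      have hp2half : 1/2 < p.2 := by
        by_contra hcon
        push_neg at hcon
        have : p.2 * (2 ^ k * 2) ≤ (1/2:ℝ) * (2 ^ k * 2) :=
          mul_le_mul_of_nonneg_right hcon (by positivity)
        linarith
      refine ⟨((1 + p.1)/2, 2 * p.2 - 1), ?_, ?_⟩
      · rw [mem_rect]
        refine ⟨⟨?_, ?_⟩, ⟨?_, ?_⟩, ⟨by linarith, by linarith⟩,
          ⟨by linarith, by linarith⟩, hndx.one_add.half, (hndy.two_mul).sub_one⟩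
        · simp only [pow_succ]; rw [div_lt_iff₀ (by positivity)]; linarith
        · simp only [pow_succ]; rw [lt_div_iff₀ (by positivity)]; linarith
        · rw [div_lt_iff₀ h2k]; linarith
        · rw [lt_div_iff₀ h2k]; linarith
      · rw [baker_gt (show (1/2 : ℝ) < (1 + p.1)/2 by linarith)]
        exact Prod.ext (by ring) (by ring)

theorem image_of_dyadic_rectangle (k k' l : ℕ) (hl : l ≤ k') (j j' : ℕ)
    (hj : j < 2 ^ k) (hj' : j' < 2 ^ k') :
    ∃ a b : ℕ, a < 2 ^ (k + l) ∧ b < 2 ^ (k' - l) ∧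
      foldedBaker^[l] '' (Hstrip j k ∩ Vstrip j' k') = Hstrip a (k + l) ∩ Vstrip b (k' - l) := by
  induction l generalizing k k' j j' with
  | zero => exact ⟨j, j', by simpa using hj, by simpa using hj', by simp⟩
  | succ l ih =>
    obtain ⟨K, rfl⟩ : ∃ K, k' = K + 1 := ⟨k' - 1, by omega⟩
    obtain ⟨a₀, b₀, ha₀, hb₀, hstep⟩ := step k K j j' hj hj'
    obtain ⟨a, b, ha, hb, him⟩ := ih (k+1) K (by omega) a₀ b₀ ha₀ hb₀
    refine ⟨a, b, ?_, ?_, ?_⟩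
    · rwa [show k + (l+1) = (k+1) + l by omega]
    · rwa [show (K+1) - (l+1) = K - l by omega]
    · calc foldedBaker^[l+1] '' (Hstrip j k ∩ Vstrip j' (K+1))
          = foldedBaker^[l] '' (foldedBaker '' (Hstrip j k ∩ Vstrip j' (K+1))) := by
            rw [Function.iterate_succ, Set.image_comp]
        _ = Hstrip a ((k+1)+l) ∩ Vstrip b (K - l) := by rw [hstep, him]
        _ = Hstrip a (k+(l+1)) ∩ Vstrip b ((K+1)-(l+1)) := by
            rw [show (k+1)+l = k+(l+1) by omega, show K - l = (K+1)-(l+1) by omega]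
end

section
/- For any d ≥ 2 there is no sequence of measure-preserving bijections of Q_d with a geometric mixing rate: for every sequence {T_n}_{n≥1} of Lebesgue-measure-preserving bijections of Q_d, every κ ∈ (0,1), and every function λ : ℕ → (0,∞) with λ(n) → 0 as n → ∞, there exists f ∈ L^∞(Q_d) with ∫_{Q_d} f dx = 0 such that no τ ∈ ℕ has the property that for all n > τ with λ(n−τ) < 1 the function f ∘ T_n^{-1} is κ-mixed to scale λ(n−τ). -/
open MeasureTheory Set Filter

noncomputable section

/-- The open unit cube `Q_d = (0,1)^d` in `ℝ^d` (with the Euclidean norm). -/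
def Qd (d : ℕ) : Set (EuclideanSpace ℝ (Fin d)) := {x | ∀ i, x i ∈ Ioo (0:ℝ) 1}

/-- `g`, a bounded mean-zero function on `Q_d` extended by zero to `ℝ^d`, is `κ`-mixed to
scale `ε`: the average of `g` over every Euclidean ball of radius `ε` centered in `Q_d` is
at most `κ ‖g‖_{L^∞(Q_d)}` in absolute value. -/
def KMixedToScale (d : ℕ) (g : EuclideanSpace ℝ (Fin d) → ℝ) (κ ε : ℝ) : Prop :=
  ∀ y ∈ Qd d, |⨍ x in Metric.ball y ε, (Qd d).indicator g x| ≤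
    κ * (eLpNorm g ⊤ (volume.restrict (Qd d))).toReal

/-!
The maps `T n` are only known to preserve the measure of images of measurable sets. This already
makes `Tinv n` null-measurable on `Q`: for measurable `O`, `Tinv n ⁻¹' O ∩ Q = T n '' (O ∩ Q)` and
its complement in `Q` have outer measures adding up to `|Q|`; by Lusin–Souslin, `Tinv n` then maps
a ball `B ⊆ Q`, up to a null set, into a measurable set of measure at most `|B|`. For each delay
`τ` choose a time `τ + m τ` whose scale `lam (m τ)` gives a ball `B_τ` about the center of `Q` of
measure at most `2^-(τ+2)`, and let `P` collect these sets for all `τ`, so that `|P| ≤ 1/2`. The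
function equal to `1` on `P` and to `-|P|/(1-|P|) ∈ [-1, 0]` elsewhere has mean zero and sup norm
at most `1`, and `f ∘ Tinv (τ + m τ)` has average `1 > κ` on `B_τ`.
-/

open scoped ENNReal Topology

namespace MeasureTheory

variable {α : Type*} [MeasurableSpace α]

theorem nullMeasurableSet_of_measure_add_measure_compl_le {ν : Measure α} [IsFiniteMeasure ν]
    {A : Set α} (h : ν A + ν Aᶜ ≤ ν univ) : NullMeasurableSet A ν := by
  set H := toMeasurable ν A
  set H' := toMeasurable ν Aᶜ
  have hunion : H ∪ H' = univ :=
    eq_univ_of_forall fun x => (em (x ∈ A)).imp (subset_toMeasurable ν A ·)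
      (subset_toMeasurable ν Aᶜ ·)
  have hinter : ν (H ∩ H') = 0 := by
    have := measure_union_add_inter (μ := ν) H (measurableSet_toMeasurable ν Aᶜ)
    rw [hunion, measure_toMeasurable, measure_toMeasurable] at this
    exact nonpos_iff_eq_zero.1 <| ENNReal.le_of_add_le_add_left (measure_ne_top ν univ)
      (this.le.trans (h.trans (add_zero _).ge))
  have hHA : H =ᵐ[ν] A := by
    refine (ae_le_set.2 (measure_mono_null ?_ hinter)).antisymm
      ((subset_toMeasurable ν A).eventuallyLE)
    exact fun x hx => ⟨hx.1, subset_toMeasurable ν Aᶜ hx.2⟩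
  exact (measurableSet_toMeasurable ν A).nullMeasurableSet.congr hHA

variable {μ : Measure α} {s : Set α} {T Tinv : α → α}

theorem measure_restrict_preimage_of_measure_image (hs : MeasurableSet s)
    (hbij : BijOn T s s) (hinv : InvOn Tinv T s s)
    (hmp : ∀ u ⊆ s, MeasurableSet u → μ (T '' u) = μ u) {t : Set α} (ht : MeasurableSet t) :
    μ.restrict s (Tinv ⁻¹' t) = μ.restrict s t := by
  have himage := hinv.1.image_inter' (s₁ := t)
  rw [hbij.image_eq] at himage
  rw [Measure.restrict_apply' hs, Measure.restrict_apply' hs, ← himage,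
    hmp _ inter_subset_right (ht.inter hs)]

theorem nullMeasurable_of_measure_image (hs : MeasurableSet s) (hμs : μ s ≠ ∞)
    (hbij : BijOn T s s) (hinv : InvOn Tinv T s s)
    (hmp : ∀ u ⊆ s, MeasurableSet u → μ (T '' u) = μ u) : NullMeasurable Tinv (μ.restrict s) := by
  have : IsFiniteMeasure (μ.restrict s) := isFiniteMeasure_restrict.2 hμs
  intro t ht
  apply nullMeasurableSet_of_measure_add_measure_compl_le
  rw [← preimage_compl, measure_restrict_preimage_of_measure_image hs hbij hinv hmp ht,
    measure_restrict_preimage_of_measure_image hs hbij hinv hmp ht.compl,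
    measure_add_measure_compl ht]

theorem exists_measurableSet_ae_mem_of_measure_image [StandardBorelSpace α]
    (hs : MeasurableSet s) (hμs : μ s ≠ ∞)
    (hbij : BijOn T s s) (hinv : InvOn Tinv T s s)
    (hmp : ∀ u ⊆ s, MeasurableSet u → μ (T '' u) = μ u) {B : Set α} (hB : MeasurableSet B)
    (hBs : B ⊆ s) :
    ∃ S ⊆ s, MeasurableSet S ∧ μ S ≤ μ B ∧ ∀ᵐ z ∂μ, z ∈ B → Tinv z ∈ S := by
  have hTinv := (nullMeasurable_of_measure_image hs hμs hbij hinv hmp).aemeasurable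
  set g := hTinv.mk Tinv
  have hgood : ∀ᵐ z ∂μ, z ∈ s → Tinv z = g z := (ae_restrict_iff' hs).1 hTinv.ae_eq_mk
  set N := toMeasurable μ {z | ¬ (z ∈ s → Tinv z = g z)}
  have hN : μ N = 0 := by rw [measure_toMeasurable]; exact ae_iff.1 hgood
  have : StandardBorelSpace ↥(s \ N) := (hs.diff (measurableSet_toMeasurable _ _)).standardBorel
  set V : ↥(s \ N) → α := fun z => g z
  have hVTinv (z : ↥(s \ N)) : V z = Tinv z := by
    by_contra h
    exact z.2.2 (subset_toMeasurable _ _ fun hz => h (hz z.2.1).symm)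
  -- Lusin–Souslin
  have hV : MeasurableEmbedding V :=
    (hTinv.measurable_mk.comp measurable_subtype_coe).measurableEmbedding fun z z' hzz' =>
      Subtype.ext (hinv.2.injOn z.2.1 z'.2.1 (by rwa [← hVTinv, ← hVTinv]))
  have hmaps : MapsTo Tinv s s := (hbij.symm hinv.symm).mapsTo
  set S := V '' (Subtype.val ⁻¹' B)
  have hSs : S ⊆ s := by
    rintro _ ⟨z, -, rfl⟩
    exact hVTinv z ▸ hmaps z.2.1
  have hSm : MeasurableSet S := hV.measurableSet_image' (measurable_subtype_coe hB)
  refine ⟨S, hSs, hSm, ?_, ?_⟩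
  · calc μ S = μ (T '' S) := (hmp S hSs hSm).symm
      _ ≤ μ B := measure_mono <| by
        rintro _ ⟨_, ⟨z, hz, rfl⟩, rfl⟩
        rw [hVTinv, hinv.2 z.2.1]
        exact hz
  · filter_upwards [measure_eq_zero_iff_ae_notMem.1 hN] with z hzN hzB
    exact ⟨⟨z, hBs hzB, hzN⟩, hzB, hVTinv _⟩

theorem tendsto_measure_ball_of_tendsto_zero [MetricSpace α] [ProperSpace α]
    [OpensMeasurableSpace α] {μ : Measure α} [IsFiniteMeasureOnCompacts μ] [NullSingletonClass μ]
    (x : α) {ι : Type*} {l : Filter ι} {r : ι → ℝ} (hr : Tendsto r l (𝓝 0)) :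
    Tendsto (fun i => μ (Metric.ball x (r i))) l (𝓝 0) := by
  have hfin : ∃ R > 0, μ (Metric.cthickening R {x}) ≠ ∞ :=
    ⟨1, one_pos, by
      rw [Metric.cthickening_singleton _ zero_le_one]
      exact measure_closedBall_lt_top.ne⟩
  have hcth := tendsto_measure_cthickening_of_isClosed hfin isClosed_singleton
  rw [measure_singleton] at hcth
  refine tendsto_of_tendsto_of_tendsto_of_le_of_le tendsto_const_nhds (hcth.comp hr)
    (fun _ => bot_le) fun i => measure_mono ?_
  rw [← Metric.thickening_singleton]
  exact Metric.thickening_subset_cthickening _ _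

theorem exists_integral_eq_zero_of_two_mul_le {μ : Measure α} {P Q : Set α} (hP : MeasurableSet P)
    (hPQ : P ⊆ Q) (hQ : μ Q ≠ ∞) (h2 : 2 * μ P ≤ μ Q) :
    ∃ f : α → ℝ, Measurable f ∧ (∀ x, |f x| ≤ 1) ∧ ∫ x in Q, f x ∂μ = 0 ∧ ∀ x ∈ P, f x = 1 := by
  have : IsFiniteMeasure (μ.restrict Q) := isFiniteMeasure_restrict.2 hQ
  set p := μ.real P
  set q := μ.real Q
  have hp : 0 ≤ p := measureReal_nonneg
  have hpq : 2 * p ≤ q := by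
    simpa [p, q, measureReal_def, ENNReal.toReal_mul] using
      ENNReal.toReal_mono hQ h2
  set c := p / (q - p)
  have hc0 : 0 ≤ c := div_nonneg hp (by linarith)
  have hc1 : c ≤ 1 := div_le_one_of_le₀ (by linarith) (by linarith)
  refine ⟨fun x => P.indicator (fun _ => 1 + c) x - c,
    (measurable_const.indicator hP).sub measurable_const, fun x => ?_, ?_, fun x hx => ?_⟩
  · dsimp only
    by_cases hx : x ∈ P
    · simp [hx]
    · rw [indicator_of_notMem hx, abs_le]
      constructor <;> linarith
  · rw [integral_sub ((integrable_const _).indicator hP) (integrable_const c),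
      setIntegral_indicator hP, inter_eq_right.2 hPQ, setIntegral_const, setIntegral_const,
      smul_eq_mul, smul_eq_mul]
    have hcqp : c * (q - p) = p := div_mul_cancel_of_imp fun h => by linarith
    change p * (1 + c) - q * c = 0
    linear_combination -hcqp
  · simp [hx]

end MeasureTheory

lemma ENNReal.two_mul_tsum_inv_two_pow_add_two : 2 * ∑' n : ℕ, (2⁻¹ : ℝ≥0∞) ^ (n + 2) = 1 := by
  simp_rw [pow_add, ENNReal.tsum_mul_right, ENNReal.tsum_geometric, ENNReal.one_sub_inv_two,
    inv_inv]
  rw [← mul_assoc, ← pow_two, ← mul_pow, ENNReal.mul_inv_cancel] <;> norm_num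

lemma Qd_eq_preimage_pi (d : ℕ) :
    Qd d = (MeasurableEquiv.toLp 2 (Fin d → ℝ)).symm ⁻¹' univ.pi fun _ => Ioo 0 1 := by
  ext x
  simp [Qd]

lemma measurableSet_Qd (d : ℕ) : MeasurableSet (Qd d) := by
  rw [Qd_eq_preimage_pi]
  exact (MeasurableSet.univ_pi fun _ => measurableSet_Ioo).preimage (MeasurableEquiv.measurable _)

lemma volume_Qd (d : ℕ) : volume (Qd d) = 1 := by
  rw [Qd_eq_preimage_pi,
    (EuclideanSpace.volume_preserving_symm_measurableEquiv_toLp (Fin d)).measure_preimage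
    (MeasurableSet.univ_pi fun _ => measurableSet_Ioo).nullMeasurableSet, volume_pi_pi]
  simp [Real.volume_Ioo]

def cubeCenter (d : ℕ) : EuclideanSpace ℝ (Fin d) := WithLp.toLp 2 fun _ => 1 / 2

lemma ball_cubeCenter_subset_Qd {d : ℕ} {ε : ℝ} (hε : ε ≤ 1 / 2) :
    Metric.ball (cubeCenter d) ε ⊆ Qd d := by
  intro z hz i
  have hzi : dist (z i) (1 / 2) < 1 / 2 :=
    ((PiLp.dist_apply_le z (cubeCenter d) i).trans_lt (Metric.mem_ball.1 hz)).trans_le hε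
  rw [Real.dist_eq, abs_sub_lt_iff] at hzi
  constructor <;> linarith

theorem not_kMixedToScale_of_ae_eq_one {d : ℕ} {g : EuclideanSpace ℝ (Fin d) → ℝ} {κ ε : ℝ}
    {y : EuclideanSpace ℝ (Fin d)} (hκ : κ < 1) (hε : 0 < ε) (hball : Metric.ball y ε ⊆ Qd d)
    (hg : ∀ x, |g x| ≤ 1) (hg1 : ∀ᵐ x, x ∈ Metric.ball y ε → g x = 1) :
    ¬ KMixedToScale d g κ ε := by
  intro hmix
  have havg : ⨍ x in Metric.ball y ε, (Qd d).indicator g x = 1 := by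
    rw [setAverage_congr_fun measurableSet_ball (g := fun _ => (1 : ℝ)) ?_,
      setAverage_const (Metric.measure_ball_pos volume y hε).ne' measure_ball_lt_top.ne]
    filter_upwards [hg1] with x hx hxB
    rw [indicator_of_mem (hball hxB), hx hxB]
  have hnorm : (eLpNorm g ⊤ (volume.restrict (Qd d))).toReal ≤ 1 := by
    refine ENNReal.toReal_le_of_le_ofReal zero_le_one ?_
    rw [eLpNorm_exponent_top]
    exact eLpNormEssSup_le_of_ae_bound (ae_of_all _ fun x => hg x)
  have := hmix y (hball (Metric.mem_ball_self hε))
  rw [havg, abs_one] at this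
  rcases le_or_gt κ 0 with hκ0 | hκ0
  · nlinarith [ENNReal.toReal_nonneg (a := eLpNorm g ⊤ (volume.restrict (Qd d)))]
  · nlinarith

theorem no_universal_geometric_mixing_rate (d : ℕ) (hd : 2 ≤ d)
    (T Tinv : ℕ → EuclideanSpace ℝ (Fin d) → EuclideanSpace ℝ (Fin d))
    (hbij : ∀ n, Set.BijOn (T n) (Qd d) (Qd d))
    (hinv : ∀ n, Set.InvOn (Tinv n) (T n) (Qd d) (Qd d))
    (hmp : ∀ n, ∀ s ⊆ Qd d, MeasurableSet s → volume (T n '' s) = volume s)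
    (κ : ℝ) (hκ : κ ∈ Ioo (0:ℝ) 1)
    (lam : ℕ → ℝ) (hlam : ∀ n, 0 < lam n) (hlim : Tendsto lam atTop (nhds 0)) :
    ∃ f : EuclideanSpace ℝ (Fin d) → ℝ,
      MemLp f ⊤ (volume.restrict (Qd d)) ∧ (∫ x in Qd d, f x) = 0 ∧
        ¬ ∃ τ : ℕ, ∀ n : ℕ, τ < n → lam (n - τ) < 1 →
            KMixedToScale d (f ∘ Tinv n) κ (lam (n - τ)) := by
  -- makes `volume` atomless
  have : Nonempty (Fin d) := ⟨⟨0, by omega⟩⟩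
  have hQ : volume (Qd d) ≠ ⊤ := by simp [volume_Qd]
  -- the scale used against the delay `τ` is `lam (m τ)`, reached at time `τ + m τ`
  have hscale (τ : ℕ) : ∃ m, 1 ≤ m ∧ lam m ≤ 1 / 2 ∧
      volume (Metric.ball (cubeCenter d) (lam m)) ≤ 2⁻¹ ^ (τ + 2) :=
    ((eventually_ge_atTop 1).and ((hlim.eventually (ge_mem_nhds (by norm_num))).and
      ((tendsto_measure_ball_of_tendsto_zero _ hlim).eventually
        (ge_mem_nhds (ENNReal.pow_pos (by norm_num) _))))).exists
  choose m hm1 hmhalf hmvol using hscale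
  have hBQ (τ : ℕ) := ball_cubeCenter_subset_Qd (d := d) (hmhalf τ)
  choose S hSQ hSm hSvol hS using fun τ => exists_measurableSet_ae_mem_of_measure_image
    (measurableSet_Qd d) hQ (hbij (τ + m τ)) (hinv _) (hmp _) measurableSet_ball (hBQ τ)
  have hP : 2 * volume (⋃ τ, S τ) ≤ volume (Qd d) := calc
    2 * volume (⋃ τ, S τ) ≤ 2 * ∑' τ : ℕ, (2⁻¹ : ℝ≥0∞) ^ (τ + 2) := by
      gcongr
      exact (measure_iUnion_le S).trans (ENNReal.tsum_le_tsum fun τ => (hSvol τ).trans (hmvol τ))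
    _ = volume (Qd d) := by rw [ENNReal.two_mul_tsum_inv_two_pow_add_two, volume_Qd]
  obtain ⟨f, hfm, hf1, hf0, hfP⟩ :=
    exists_integral_eq_zero_of_two_mul_le (MeasurableSet.iUnion hSm) (iUnion_subset hSQ) hQ hP
  refine ⟨f, memLp_top_of_bound hfm.aestronglyMeasurable 1 (ae_of_all _ (hf1 ·)), hf0, ?_⟩
  rintro ⟨τ, hmix⟩
  have hdelay : τ + m τ - τ = m τ := by omega
  have hmixτ := hmix (τ + m τ) (by linarith [hm1 τ]) (by rw [hdelay]; linarith [hmhalf τ])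
  rw [hdelay] at hmixτ
  refine not_kMixedToScale_of_ae_eq_one hκ.2 (hlam _) (hBQ τ) (fun x => hf1 _) ?_ hmixτ
  filter_upwards [hS τ] with z hz hzB using hfP _ (mem_iUnion.2 ⟨τ, hz hzB⟩)

end
end
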